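/- arXiv:2003.07055 — 3 statements merged into one kernel-verified Lean document; each statement's English description precedes it below -/
import Mathlib

section
/- Let Z₀ = {(0,1),(1,1),(1,0),(1,2)} ⊆ ℤ². Define 𝒵₀ := {k ∈ ℤ² : k ∈ Z₀ or −k ∈ Z₀}, and inductively for n ≥ 1, 𝒵ₙ := {k + ℓ : k ∈ 𝒵ₙ₋₁, ℓ ∈ 𝒵₀, k₂ℓ₁ − k₁ℓ₂ ≠ 0, |k| ≠ |ℓ|}. Then ⋃_{n≥0} 𝒵_{2n} = ℤ² ∖ {(0,0)} and ⋃_{n≥0} 𝒵_{2n+1} = ℤ² ∖ {(0,0)}. -/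
/-- The set of stochastically forced modes. -/
def Zforce : Set (ℤ × ℤ) := {(0, 1), (1, 1), (1, 0), (1, 2)}

/-- Euclidean norm of an integer vector. -/
noncomputable def znorm (k : ℤ × ℤ) : ℝ := Real.sqrt ((k.1 : ℝ) ^ 2 + (k.2 : ℝ) ^ 2)

/-- One step of the generating procedure: from the set `A`, using directions `ℓ ∈ S`. -/
def Znext (S A : Set (ℤ × ℤ)) : Set (ℤ × ℤ) :=
  {p | ∃ k ∈ A, ∃ l ∈ S, k.2 * l.1 - k.1 * l.2 ≠ 0 ∧ znorm k ≠ znorm l ∧ p = k + l}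

/-- The sets `𝒵ₙ` of the paper. -/
def Zcal : ℕ → Set (ℤ × ℤ)
  | 0 => {k | k ∈ Zforce ∨ -k ∈ Zforce}
  | n + 1 => Znext {k | k ∈ Zforce ∨ -k ∈ Zforce} (Zcal n)

lemma znorm_sq (k : ℤ × ℤ) : znorm k ^ 2 = (k.1 : ℝ) ^ 2 + (k.2 : ℝ) ^ 2 := by
  rw [znorm, Real.sq_sqrt]; positivity

lemma znorm_ne {k l : ℤ × ℤ} (h : k.1 ^ 2 + k.2 ^ 2 ≠ l.1 ^ 2 + l.2 ^ 2) :
    znorm k ≠ znorm l := by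
  intro he
  apply h
  have h2 : (k.1 : ℝ) ^ 2 + (k.2 : ℝ) ^ 2 = (l.1 : ℝ) ^ 2 + (l.2 : ℝ) ^ 2 := by
    rw [← znorm_sq, ← znorm_sq, he]
  exact_mod_cast h2

lemma znorm_neg (k : ℤ × ℤ) : znorm (-k) = znorm k := by
  simp [znorm]

lemma mem_step {n : ℕ} {k l p : ℤ × ℤ} (hk : k ∈ Zcal n)
    (hl : l ∈ Zforce ∨ -l ∈ Zforce)
    (hc : k.2 * l.1 - k.1 * l.2 ≠ 0)
    (hn : k.1 ^ 2 + k.2 ^ 2 ≠ l.1 ^ 2 + l.2 ^ 2)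
    (hp : p = k + l) : p ∈ Zcal (n + 1) :=
  ⟨k, hk, l, hl, hc, znorm_ne hn, hp⟩

lemma neg_mem : ∀ n, ∀ p ∈ Zcal n, -p ∈ Zcal n := by
  intro n
  induction n with
  | zero =>
      rintro p (h | h)
      · exact Or.inr (by simpa using h)
      · exact Or.inl h
  | succ n ih =>
      rintro p ⟨k, hk, l, hl, hc, hn, rfl⟩
      refine ⟨-k, ih k hk, -l, ?_, by simpa using hc, by simpa [znorm_neg] using hn,
        by rw [neg_add]⟩
      rcases hl with h | h
      · exact Or.inr (by simpa using h)
      · exact Or.inl h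

lemma zero_not_mem : ∀ n, ((0, 0) : ℤ × ℤ) ∉ Zcal n := by
  intro n
  induction n with
  | zero =>
      rintro (h | h) <;> simp [Zforce, Prod.ext_iff] at h
  | succ n ih =>
      rintro ⟨k, hk, l, hl, hc, hn, hp⟩
      have h1 := congrArg Prod.fst hp
      have h2 := congrArg Prod.snd hp
      simp only [Prod.fst_add, Prod.snd_add] at h1 h2
      have e1 : k.1 = -l.1 := by omega
      have e2 : k.2 = -l.2 := by omega
      apply hc
      rw [e1, e2]; ring

/-- The union of all the `Zcal n`. -/
def UZ : Set (ℤ × ℤ) := ⋃ n, Zcal n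

lemma mem_UZ_of {n : ℕ} {p : ℤ × ℤ} (h : p ∈ Zcal n) : p ∈ UZ :=
  Set.mem_iUnion.2 ⟨n, h⟩

lemma step_U {k l p : ℤ × ℤ} (hk : k ∈ UZ)
    (hl : l ∈ Zforce ∨ -l ∈ Zforce)
    (hc : k.2 * l.1 - k.1 * l.2 ≠ 0)
    (hn : k.1 ^ 2 + k.2 ^ 2 ≠ l.1 ^ 2 + l.2 ^ 2)
    (hp : p = k + l) : p ∈ UZ := by
  obtain ⟨n, hn'⟩ := Set.mem_iUnion.1 hk
  exact mem_UZ_of (mem_step hn' hl hc hn hp)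

lemma neg_mem_U {p : ℤ × ℤ} (h : p ∈ UZ) : -p ∈ UZ := by
  obtain ⟨n, hn⟩ := Set.mem_iUnion.1 h
  exact mem_UZ_of (neg_mem n p hn)

lemma base_mem {p : ℤ × ℤ} (h : p ∈ Zforce ∨ -p ∈ Zforce) : p ∈ Zcal 0 := h

lemma row1 : ∀ a : ℤ, ((a, 1) : ℤ × ℤ) ∈ UZ := by
  have h01 : ((0, 1) : ℤ × ℤ) ∈ UZ := mem_UZ_of (n := 0) (Or.inl (by simp [Zforce]))
  have h11 : ((1, 1) : ℤ × ℤ) ∈ UZ := mem_UZ_of (n := 0) (Or.inl (by simp [Zforce]))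
  have h02 : ((0, 2) : ℤ × ℤ) ∈ UZ := by
    refine step_U (k := (-1, 0)) (l := (1, 2)) ?_ (Or.inl (by simp [Zforce]))
      (by norm_num) (by norm_num) (by norm_num [Prod.ext_iff])
    exact mem_UZ_of (n := 0) (Or.inr (by simp [Zforce]))
  have hm11 : ((-1, 1) : ℤ × ℤ) ∈ UZ := by
    refine step_U (k := (0, 2)) (l := (-1, -1)) h02 (Or.inr (by simp [Zforce]))
      (by norm_num) (by norm_num) (by norm_num [Prod.ext_iff])
  have hpos : ∀ a : ℤ, 1 ≤ a → ((a, 1) : ℤ × ℤ) ∈ UZ := by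
    refine Int.le_induction h11 ?_
    intro a ha ih
    refine step_U (k := (a, 1)) (l := (1, 0)) ih (Or.inl (by simp [Zforce]))
      (by norm_num) (by intro h; simp at h; nlinarith) (by simp [Prod.ext_iff]; try omega)
  have hneg : ∀ a : ℤ, a ≤ -1 → ((a, 1) : ℤ × ℤ) ∈ UZ := by
    refine Int.le_induction_down hm11 ?_
    intro a ha ih
    refine step_U (k := (a, 1)) (l := (-1, 0)) ih (Or.inr (by simp [Zforce]))
      (by norm_num) (by intro h; simp at h; nlinarith) (by simp [Prod.ext_iff]; try omega)
  intro a
  rcases lt_trichotomy a 0 with h | h | h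
  · exact hneg a (by omega)
  · subst h; exact h01
  · exact hpos a (by omega)

lemma rowb : ∀ b : ℤ, 1 ≤ b → ∀ a : ℤ, ((a, b) : ℤ × ℤ) ∈ UZ := by
  refine Int.le_induction row1 ?_
  intro b hb ih a
  by_cases ha : a = 0
  · subst ha
    by_cases hb1 : b = 1
    · subst hb1
      refine step_U (k := (-1, 0)) (l := (1, 2)) ?_ (Or.inl (by simp [Zforce]))
        (by norm_num) (by norm_num) (by norm_num [Prod.ext_iff])
      exact mem_UZ_of (n := 0) (Or.inr (by simp [Zforce]))
    · have hb2 : 2 ≤ b := by omega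
      refine step_U (k := (-1, b)) (l := (1, 1)) (ih (-1)) (Or.inl (by simp [Zforce]))
        (by intro h; simp at h; omega) (by intro h; simp at h; nlinarith)
        (by simp [Prod.ext_iff])
  · refine step_U (k := (a, b)) (l := (0, 1)) (ih a) (Or.inl (by simp [Zforce]))
      (by intro h; simp at h; omega)
      (by intro h; simp at h
          have h1 : 1 ≤ a ^ 2 := by rcases lt_or_gt_of_ne ha with h' | h' <;> nlinarith
          nlinarith)
      (by simp [Prod.ext_iff])

lemma row0 {a : ℤ} (ha : a ≠ 0) : ((a, 0) : ℤ × ℤ) ∈ UZ := by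
  have hk : ((a, -1) : ℤ × ℤ) ∈ UZ := by
    have := neg_mem_U (rowb 1 le_rfl (-a))
    simpa using this
  refine step_U (k := (a, -1)) (l := (0, 1)) hk (Or.inl (by simp [Zforce]))
    (by intro h; simp at h; omega)
    (by intro h; simp at h
        have h1 : 1 ≤ a ^ 2 := by rcases lt_or_gt_of_ne ha with h' | h' <;> nlinarith
        nlinarith)
    (by simp [Prod.ext_iff])

lemma UZ_eq : UZ = {k : ℤ × ℤ | k ≠ (0, 0)} := by
  ext ⟨a, b⟩
  simp only [Set.mem_setOf_eq]
  constructor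
  · intro h hp
    obtain ⟨n, hn⟩ := Set.mem_iUnion.1 h
    exact zero_not_mem n (hp ▸ hn)
  · intro h
    rcases lt_trichotomy b 0 with hb | hb | hb
    · have := neg_mem_U (rowb (-b) (by omega) (-a))
      simpa using this
    · subst hb
      exact row0 (by simpa [Prod.ext_iff] using h)
    · exact rowb b (by omega) a

lemma Zcal_succ_mono : ∀ n, Zcal n ⊆ Zcal (n + 1) := by
  intro n
  induction n with
  | zero =>
      intro p hp
      have key : ∀ q ∈ Zforce, q ∈ Zcal 1 := by
        intro q hq
        simp only [Zforce, Set.mem_insert_iff, Set.mem_singleton_iff] at hq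
        rcases hq with rfl | rfl | rfl | rfl
        · exact mem_step (n := 0) (k := (-1, -1)) (l := (1, 2))
            (Or.inr (by simp [Zforce])) (Or.inl (by simp [Zforce]))
            (by norm_num) (by norm_num) (by norm_num [Prod.ext_iff])
        · exact mem_step (n := 0) (k := (0, -1)) (l := (1, 2))
            (Or.inr (by simp [Zforce])) (Or.inl (by simp [Zforce]))
            (by norm_num) (by norm_num) (by norm_num [Prod.ext_iff])
        · exact mem_step (n := 0) (k := (0, -1)) (l := (1, 1))
            (Or.inr (by simp [Zforce])) (Or.inl (by simp [Zforce]))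
            (by norm_num) (by norm_num) (by norm_num [Prod.ext_iff])
        · exact mem_step (n := 0) (k := (0, 1)) (l := (1, 1))
            (Or.inl (by simp [Zforce])) (Or.inl (by simp [Zforce]))
            (by norm_num) (by norm_num) (by norm_num [Prod.ext_iff])
      rcases hp with h | h
      · exact key p h
      · have := neg_mem 1 (-p) (key (-p) h)
        simpa using this
  | succ n ih =>
      rintro p ⟨k, hk, l, hl, hc, hn, hp⟩
      exact ⟨k, ih hk, l, hl, hc, hn, hp⟩

lemma Zcal_mono : ∀ {m n : ℕ}, m ≤ n → Zcal m ⊆ Zcal n := by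
  intro m n h
  induction n with
  | zero => have : m = 0 := by omega
            subst this; exact fun _ h => h
  | succ n ih =>
      rcases Nat.lt_or_ge m (n + 1) with h' | h'
      · exact fun p hp => Zcal_succ_mono n (ih (by omega) hp)
      · have : m = n + 1 := by omega
        subst this; exact fun _ h => h

theorem even_odd_unions_cover :
    (⋃ n : ℕ, Zcal (2 * n)) = {k : ℤ × ℤ | k ≠ (0, 0)} ∧
      (⋃ n : ℕ, Zcal (2 * n + 1)) = {k : ℤ × ℤ | k ≠ (0, 0)} := by
  have hsub : ∀ f : ℕ → ℕ, (∀ n, n ≤ f n) → (⋃ n : ℕ, Zcal (f n)) = {k : ℤ × ℤ | k ≠ (0, 0)} := by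
    intro f hf
    apply Set.Subset.antisymm
    · rintro p hp rfl
      obtain ⟨n, hn⟩ := Set.mem_iUnion.1 hp
      exact zero_not_mem (f n) hn
    · intro p hp
      have : p ∈ UZ := UZ_eq ▸ hp
      obtain ⟨n, hn⟩ := Set.mem_iUnion.1 this
      exact Set.mem_iUnion.2 ⟨n, Zcal_mono (hf n) hn⟩
  exact ⟨hsub (fun n => 2 * n) (fun n => by show n ≤ 2 * n; omega), hsub (fun n => 2 * n + 1) (fun n => by show n ≤ 2 * n + 1; omega)⟩
end

section
/- For all k, ℓ ∈ ℤ² ∖ {(0,0)} and all x ∈ ℝ², with a = (k₂ℓ₁ − k₁ℓ₂)/(|k||ℓ|), one has the identity 𝒥^{0,1}_{k,ℓ}(x) + 𝒥^{0,1}_{ℓ,k}(x) = a·cos((k+ℓ)·x)·(k₂ − ℓ₂, ℓ₁ − k₁). -/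
/-- The pairing `k · x = k₁x₁ + k₂x₂`. -/
noncomputable def kdot (k : ℤ × ℤ) (x : ℝ × ℝ) : ℝ := (k.1 : ℝ) * x.1 + (k.2 : ℝ) * x.2

/-- The vector field `e_k^0(x) = (k₂/|k|, −k₁/|k|)·cos(k·x)`. -/
noncomputable def e0 (k : ℤ × ℤ) : ℝ × ℝ → ℝ × ℝ := fun x =>
  (((k.2 : ℝ) / znorm k) * Real.cos (kdot k x), (-(k.1 : ℝ) / znorm k) * Real.cos (kdot k x))

/-- The vector field `e_k^1(x) = (−k₂/|k|, k₁/|k|)·sin(k·x)`. -/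
noncomputable def e1 (k : ℤ × ℤ) : ℝ × ℝ → ℝ × ℝ := fun x =>
  ((-(k.2 : ℝ) / znorm k) * Real.sin (kdot k x), ((k.1 : ℝ) / znorm k) * Real.sin (kdot k x))

/-- The advection `b(u,v) = (u·∇)v`, i.e. the derivative of `v` in the direction `u`. -/
noncomputable def adv (u v : ℝ × ℝ → ℝ × ℝ) : ℝ × ℝ → ℝ × ℝ := fun x => fderiv ℝ v x (u x)

/-- The `L²` pairing `⟨f,g⟩ = ∫_{[−π,π]²} f(x)·g(x) dx`. -/
noncomputable def pairL2 (f g : ℝ × ℝ → ℝ × ℝ) : ℝ :=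
  ∫ x in Set.Icc ((-Real.pi, -Real.pi) : ℝ × ℝ) ((Real.pi, Real.pi) : ℝ × ℝ),
    ((f x).1 * (g x).1 + (f x).2 * (g x).2)

/-- `𝒥^{0,1}_{k,ℓ} = b(e_k^0, e_ℓ^1) + b(e_ℓ^1, e_k^0)`. -/
noncomputable def J01 (k l : ℤ × ℤ) : ℝ × ℝ → ℝ × ℝ := fun x =>
  adv (e0 k) (e1 l) x + adv (e1 l) (e0 k) x

/-- `𝒥^{0,0}_{k,ℓ} = b(e_k^0, e_ℓ^0) + b(e_ℓ^0, e_k^0)`. -/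
noncomputable def J00 (k l : ℤ × ℤ) : ℝ × ℝ → ℝ × ℝ := fun x =>
  adv (e0 k) (e0 l) x + adv (e0 l) (e0 k) x

/-- `𝒥^{1,1}_{k,ℓ} = b(e_k^1, e_ℓ^1) + b(e_ℓ^1, e_k^1)`. -/
noncomputable def J11 (k l : ℤ × ℤ) : ℝ × ℝ → ℝ × ℝ := fun x =>
  adv (e1 k) (e1 l) x + adv (e1 l) (e1 k) x

/-- `𝒵^{0,1}_{k,ℓ} = b(e_k^0, e_ℓ^1) − b(e_ℓ^1, e_k^0)`. -/
noncomputable def Z01 (k l : ℤ × ℤ) : ℝ × ℝ → ℝ × ℝ := fun x =>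
  adv (e0 k) (e1 l) x - adv (e1 l) (e0 k) x

/-- `𝒵^{0,0}_{k,ℓ} = b(e_k^0, e_ℓ^0) − b(e_ℓ^0, e_k^0)`. -/
noncomputable def Z00 (k l : ℤ × ℤ) : ℝ × ℝ → ℝ × ℝ := fun x =>
  adv (e0 k) (e0 l) x - adv (e0 l) (e0 k) x

/-- `𝒵^{1,1}_{k,ℓ} = b(e_k^1, e_ℓ^1) − b(e_ℓ^1, e_k^1)`. -/
noncomputable def Z11 (k l : ℤ × ℤ) : ℝ × ℝ → ℝ × ℝ := fun x =>
  adv (e1 k) (e1 l) x - adv (e1 l) (e1 k) x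


noncomputable def kdotL (k : ℤ × ℤ) : (ℝ × ℝ) →L[ℝ] ℝ :=
  (k.1 : ℝ) • (ContinuousLinearMap.fst ℝ ℝ ℝ) + (k.2 : ℝ) • (ContinuousLinearMap.snd ℝ ℝ ℝ)

lemma hasFDerivAt_kdot (k : ℤ × ℤ) (x : ℝ × ℝ) : HasFDerivAt (kdot k) (kdotL k) x := by
  have : kdot k = fun x => kdotL k x := by
    funext y; simp [kdot, kdotL]
  rw [this]
  exact (kdotL k).hasFDerivAt

lemma hasFDerivAt_e1 (k : ℤ × ℤ) (x : ℝ × ℝ) :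
    HasFDerivAt (e1 k)
      (((((-(k.2 : ℝ) / znorm k)) * Real.cos (kdot k x)) • kdotL k).prod
        ((((k.1 : ℝ) / znorm k) * Real.cos (kdot k x)) • kdotL k)) x := by
  have hs : HasFDerivAt (fun y => Real.sin (kdot k y)) (Real.cos (kdot k x) • kdotL k) x :=
    (hasFDerivAt_kdot k x).sin
  have h1 := hs.const_mul ((-(k.2 : ℝ) / znorm k))
  have h2 := hs.const_mul (((k.1 : ℝ) / znorm k))
  have := HasFDerivAt.prodMk h1 h2
  refine this.congr_fderiv ?_
  ext v <;> simp [mul_assoc] <;> ring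

lemma hasFDerivAt_e0 (k : ℤ × ℤ) (x : ℝ × ℝ) :
    HasFDerivAt (e0 k)
      (((((k.2 : ℝ) / znorm k) * -Real.sin (kdot k x)) • kdotL k).prod
        (((-(k.1 : ℝ) / znorm k) * -Real.sin (kdot k x)) • kdotL k)) x := by
  have hs : HasFDerivAt (fun y => Real.cos (kdot k y)) (-Real.sin (kdot k x) • kdotL k) x :=
    (hasFDerivAt_kdot k x).cos
  have h1 := hs.const_mul (((k.2 : ℝ) / znorm k))
  have h2 := hs.const_mul ((-(k.1 : ℝ) / znorm k))
  have := HasFDerivAt.prodMk h1 h2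
  refine this.congr_fderiv ?_
  ext v <;> simp [mul_assoc] <;> ring

lemma adv_e1 (l : ℤ × ℤ) (u : ℝ × ℝ → ℝ × ℝ) (x : ℝ × ℝ) :
    adv u (e1 l) x =
      ((-(l.2 : ℝ) / znorm l) * Real.cos (kdot l x) *
          ((l.1 : ℝ) * (u x).1 + (l.2 : ℝ) * (u x).2),
        ((l.1 : ℝ) / znorm l) * Real.cos (kdot l x) *
          ((l.1 : ℝ) * (u x).1 + (l.2 : ℝ) * (u x).2)) := by
  unfold adv
  rw [(hasFDerivAt_e1 l x).fderiv]
  simp [kdotL]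
  constructor <;> ring

lemma adv_e0 (l : ℤ × ℤ) (u : ℝ × ℝ → ℝ × ℝ) (x : ℝ × ℝ) :
    adv u (e0 l) x =
      (((l.2 : ℝ) / znorm l) * -Real.sin (kdot l x) *
          ((l.1 : ℝ) * (u x).1 + (l.2 : ℝ) * (u x).2),
        (-(l.1 : ℝ) / znorm l) * -Real.sin (kdot l x) *
          ((l.1 : ℝ) * (u x).1 + (l.2 : ℝ) * (u x).2)) := by
  unfold adv
  rw [(hasFDerivAt_e0 l x).fderiv]
  simp [kdotL]
  constructor <;> ring

theorem J01_sum_identity (k l : ℤ × ℤ) (hk : k ≠ (0, 0)) (hl : l ≠ (0, 0))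
    (a : ℝ) (ha : a = ((k.2 : ℝ) * (l.1 : ℝ) - (k.1 : ℝ) * (l.2 : ℝ)) / (znorm k * znorm l))
    (x : ℝ × ℝ) :
    J01 k l x + J01 l k x =
      (a * Real.cos (kdot (k + l) x) * ((k.2 : ℝ) - (l.2 : ℝ)),
       a * Real.cos (kdot (k + l) x) * ((l.1 : ℝ) - (k.1 : ℝ))) := by
  subst ha
  have hadd : kdot (k + l) x = kdot k x + kdot l x := by
    simp [kdot, Prod.fst_add, Prod.snd_add]; push_cast; ring
  simp only [J01, adv_e1, adv_e0, hadd, Real.cos_add, e0, e1, Prod.mk_add_mk, Prod.mk.injEq]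
  constructor <;> ring
end

section
/- For all k, ℓ ∈ ℤ² ∖ {(0,0)} and all x ∈ ℝ², with a = (k₂ℓ₁ − k₁ℓ₂)/(|k||ℓ|), one has b(e_k^0, e_ℓ^1)(x) − b(e_k^1, e_ℓ^0)(x) = a·cos((k−ℓ)·x)·(−ℓ₂, ℓ₁). -/
lemma hasFDerivAt_kdot_s10 (k : ℤ × ℤ) (x : ℝ × ℝ) :
    HasFDerivAt (kdot k)
      ((k.1 : ℝ) • ContinuousLinearMap.fst ℝ ℝ ℝ + (k.2 : ℝ) • ContinuousLinearMap.snd ℝ ℝ ℝ)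
      x := by
  have h := ((hasFDerivAt_fst (𝕜 := ℝ) (p := x)).const_mul (k.1 : ℝ)).add
    ((hasFDerivAt_snd (𝕜 := ℝ) (p := x)).const_mul (k.2 : ℝ))
  exact h

lemma fderiv_e1_apply (k : ℤ × ℤ) (x u : ℝ × ℝ) :
    fderiv ℝ (e1 k) x u =
      ((-(k.2 : ℝ) / znorm k) * Real.cos (kdot k x) * kdot k u,
       ((k.1 : ℝ) / znorm k) * Real.cos (kdot k x) * kdot k u) := by
  have hL := hasFDerivAt_kdot_s10 k x
  have h1 := (hL.sin.const_mul (-(k.2 : ℝ) / znorm k)).prodMk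
    (hL.sin.const_mul ((k.1 : ℝ) / znorm k))
  have h2 : HasFDerivAt (e1 k) _ x := h1
  rw [h2.fderiv]
  simp [kdot, ContinuousLinearMap.smul_apply, ContinuousLinearMap.add_apply,
    smul_eq_mul]
  ring_nf
  constructor <;> trivial

lemma fderiv_e0_apply (k : ℤ × ℤ) (x u : ℝ × ℝ) :
    fderiv ℝ (e0 k) x u =
      (((k.2 : ℝ) / znorm k) * (-Real.sin (kdot k x)) * kdot k u,
       (-(k.1 : ℝ) / znorm k) * (-Real.sin (kdot k x)) * kdot k u) := by
  have hL := hasFDerivAt_kdot_s10 k x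
  have h1 := (hL.cos.const_mul ((k.2 : ℝ) / znorm k)).prodMk
    (hL.cos.const_mul (-(k.1 : ℝ) / znorm k))
  have h2 : HasFDerivAt (e0 k) _ x := h1
  rw [h2.fderiv]
  simp [kdot, ContinuousLinearMap.smul_apply, ContinuousLinearMap.add_apply,
    smul_eq_mul]
  ring_nf
  constructor <;> trivial

theorem adv_diff_identity_one (k l : ℤ × ℤ) (hk : k ≠ (0, 0)) (hl : l ≠ (0, 0))
    (a : ℝ) (ha : a = ((k.2 : ℝ) * (l.1 : ℝ) - (k.1 : ℝ) * (l.2 : ℝ)) / (znorm k * znorm l))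
    (x : ℝ × ℝ) :
    adv (e0 k) (e1 l) x - adv (e1 k) (e0 l) x =
      (a * Real.cos (kdot (k - l) x) * (-(l.2 : ℝ)),
       a * Real.cos (kdot (k - l) x) * (l.1 : ℝ)) := by
  have hdot : kdot (k - l) x = kdot k x - kdot l x := by
    simp [kdot, Prod.fst_sub, Prod.snd_sub]
    push_cast
    ring
  have hcos : Real.cos (kdot (k - l) x) =
      Real.cos (kdot k x) * Real.cos (kdot l x) + Real.sin (kdot k x) * Real.sin (kdot l x) := by
    rw [hdot, Real.cos_sub]
  have hkl0 : kdot l (e0 k x) =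
      ((l.1 : ℝ) * ((k.2 : ℝ) / znorm k) + (l.2 : ℝ) * (-(k.1 : ℝ) / znorm k)) *
        Real.cos (kdot k x) := by
    simp [kdot, e0]; ring
  have hkl1 : kdot l (e1 k x) =
      ((l.1 : ℝ) * (-(k.2 : ℝ) / znorm k) + (l.2 : ℝ) * ((k.1 : ℝ) / znorm k)) *
        Real.sin (kdot k x) := by
    simp [kdot, e1]; ring
  simp only [adv, fderiv_e1_apply, fderiv_e0_apply, hkl0, hkl1, Prod.mk_sub_mk, ha, hcos]
  simp only [Prod.mk.injEq]
  constructor <;> · field_simp; ring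
end
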